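/- Among all rejection regions R ⊆ Ω in a countable sample space, the region R* = {x : p_a(x) > k·p_0(x)} maximizes EU(R) = Σ_{x∈R}[p_a(x)·P_a·(U_cr − U_II) − p_0(x)·P_0·(U_cn − U_I)], where k = (P_0/P_a)·((U_cn − U_I)/(U_cr − U_II)); moreover any region R with R* ⊆ R ⊆ {x : p_a(x) ≥ k·p_0(x)} achieves the same maximal value. -/

import Mathlib

/-! Writing `c = Pₐ (Ucr - UII) > 0`, the integrand is `g = c (pₐ - k p₀)`, so `R*` is exactly the
set where `g` is positive and `{pₐ ≥ k p₀}` the set where it is nonnegative. Summing `g` over `R`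
can only gain by adding points where `g > 0` and dropping points where `g < 0`, while points where
`g = 0` do not change the sum. -/

namespace Set

variable {α M : Type*}

theorem indicator_eq_indicator_of_subset_of_eq_zero [Zero M] {s t : Set α} {f : α → M}
    (hst : s ⊆ t) (hf : ∀ a ∈ t, a ∉ s → f a = 0) : t.indicator f = s.indicator f := by
  funext a
  by_cases has : a ∈ s
  · rw [indicator_of_mem has, indicator_of_mem (hst has)]
  · rw [indicator_of_notMem has]
    by_cases hat : a ∈ t
    · rw [indicator_of_mem hat, hf a hat has]
    · exact indicator_of_notMem hat f

theorem indicator_eq_indicator_pos_of_subset_nonneg [Zero M] [LinearOrder M] {s : Set α}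
    {f : α → M} (hpos : {a | 0 < f a} ⊆ s) (hnonneg : s ⊆ {a | 0 ≤ f a}) :
    s.indicator f = {a | 0 < f a}.indicator f :=
  indicator_eq_indicator_of_subset_of_eq_zero hpos fun _ has hpa ↦
    (hnonneg has).antisymm' (not_lt.mp hpa)

theorem indicator_le_indicator_pos [Zero M] [LinearOrder M] (s : Set α) (f : α → M) :
    s.indicator f ≤ {a | 0 < f a}.indicator f := by
  rw [← indicator_eq_indicator_pos_of_subset_nonneg (fun _ ↦ le_of_lt) le_rfl]
  exact indicator_le_indicator_nonneg s f

end Set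

theorem tsum_indicator_le_tsum_indicator_pos {α M : Type*} [AddCommGroup M] [LinearOrder M]
    [IsOrderedAddMonoid M] [UniformSpace M] [IsUniformAddGroup M] [CompleteSpace M]
    [OrderClosedTopology M] {f : α → M} (hf : Summable f) (s : Set α) :
    ∑' a, s.indicator f a ≤ ∑' a, {a | 0 < f a}.indicator f a :=
  (hf.indicator s).tsum_le_tsum (Set.indicator_le_indicator_pos s f) (hf.indicator _)

theorem likelihood_ratio_region_maximizes_EU_general
    {Ω : Type*} (p₀ pₐ : Ω → ℝ) (P₀ Pₐ UI Ucn Ucr UII : ℝ)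
    (hPa : 0 < Pₐ) (hUcr : UII < Ucr)
    (g : Ω → ℝ)
    (hg : ∀ y, g y = pₐ y * Pₐ * (Ucr - UII) - p₀ y * P₀ * (Ucn - UI))
    (hsum : Summable fun y => |g y|)
    (k : ℝ) (hk : k = (P₀ / Pₐ) * ((Ucn - UI) / (Ucr - UII))) :
    (∀ R : Set Ω, (∑' y, Set.indicator R g y) ≤
        ∑' y, Set.indicator {x | k * p₀ x < pₐ x} g y) ∧
      (∀ R : Set Ω, {x | k * p₀ x < pₐ x} ⊆ R → R ⊆ {x | k * p₀ x ≤ pₐ x} →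
        (∑' y, Set.indicator R g y) =
          ∑' y, Set.indicator {x | k * p₀ x < pₐ x} g y) := by
  have hc : 0 < Pₐ * (Ucr - UII) := mul_pos hPa (sub_pos.mpr hUcr)
  have hg_eq : ∀ y, g y = Pₐ * (Ucr - UII) * (pₐ y - k * p₀ y) := fun y ↦ by
    rw [hg, hk]
    field_simp [hPa.ne', (sub_pos.mpr hUcr).ne']
  have hpos : {x | k * p₀ x < pₐ x} = {x | 0 < g x} := by
    ext x
    simp only [Set.mem_ofPred_eq, hg_eq, mul_pos_iff_of_pos_left hc, sub_pos]
  have hnonneg : {x | k * p₀ x ≤ pₐ x} = {x | 0 ≤ g x} := by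
    ext x
    simp only [Set.mem_ofPred_eq, hg_eq, mul_nonneg_iff_of_pos_left hc, sub_nonneg]
  rw [hpos, hnonneg]
  exact ⟨tsum_indicator_le_tsum_indicator_pos hsum.of_abs, fun R hR₁ hR₂ ↦
    congrArg tsum (Set.indicator_eq_indicator_pos_of_subset_nonneg hR₁ hR₂)⟩

/-- The region `R* = {x | pₐ x > k·p₀ x}` maximizes
`EU(R) = ∑_{x∈R} g x`, and any `R` with `R* ⊆ R ⊆ {x | pₐ x ≥ k·p₀ x}` attains the
same maximal value, where `k = (P₀/Pₐ)·((Ucn-UI)/(Ucr-UII))`. -/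
theorem likelihood_ratio_region_maximizes_EU
    {Ω : Type*} [Countable Ω] (p₀ pₐ : Ω → ℝ) (P₀ Pₐ UI Ucn Ucr UII : ℝ)
    (hP₀ : 0 < P₀) (hPa : 0 < Pₐ) (hUcn : UI < Ucn) (hUcr : UII < Ucr)
    (h₀pos : ∀ x, 0 ≤ p₀ x) (hapos : ∀ x, 0 ≤ pₐ x)
    (g : Ω → ℝ)
    (hg : ∀ y, g y = pₐ y * Pₐ * (Ucr - UII) - p₀ y * P₀ * (Ucn - UI))
    (hsum : Summable fun y => |g y|)
    (k : ℝ) (hk : k = (P₀ / Pₐ) * ((Ucn - UI) / (Ucr - UII))) :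
    (∀ R : Set Ω, (∑' y, Set.indicator R g y) ≤
        ∑' y, Set.indicator {x | k * p₀ x < pₐ x} g y) ∧
      (∀ R : Set Ω, {x | k * p₀ x < pₐ x} ⊆ R → R ⊆ {x | k * p₀ x ≤ pₐ x} →
        (∑' y, Set.indicator R g y) =
          ∑' y, Set.indicator {x | k * p₀ x < pₐ x} g y) :=
  likelihood_ratio_region_maximizes_EU_general p₀ pₐ P₀ Pₐ UI Ucn Ucr UII hPa hUcr g hg hsum k hk
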